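/- For q >= 3, m >= 1, t < q, the number of proper q-colorings of G_{m,t} in which I_1 and I_1' receive the same color is q (q-1)^m ((q-1)!)^{2m}, and the number in which I_1 and I_1' receive distinct colors is q (q-1) (q-2)^m ((q-1)!)^{2m}. Consequently, for a uniformly random proper q-coloring of G_{m,t}, the probability that I_1 and I_1' have the same color is at least 1 - (q-1) e^{-m/(q-1)}. -/

import Mathlib

/-- Vertices of `G_{m,t}`: cliques `C_i` and `C_i'` (each a copy of `Fin m × Fin (q-1)`),
independent sets `I_i` and `I_i'` (copies of `Fin m × Fin t`), and vertices `s_i`. -/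
abbrev Vmt (m q t : ℕ) :=
  (Fin m × Fin (q - 1)) ⊕ ((Fin m × Fin (q - 1)) ⊕ ((Fin m × Fin t) ⊕ ((Fin m × Fin t) ⊕ Fin m)))

def CV {m q t : ℕ} (i : Fin m) (x : Fin (q - 1)) : Vmt m q t := Sum.inl (i, x)
def CV' {m q t : ℕ} (i : Fin m) (x : Fin (q - 1)) : Vmt m q t := Sum.inr (Sum.inl (i, x))
def IV {m q t : ℕ} (i : Fin m) (y : Fin t) : Vmt m q t := Sum.inr (Sum.inr (Sum.inl (i, y)))
def IV' {m q t : ℕ} (i : Fin m) (y : Fin t) : Vmt m q t :=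
  Sum.inr (Sum.inr (Sum.inr (Sum.inl (i, y))))
def SV {m q t : ℕ} (i : Fin m) : Vmt m q t := Sum.inr (Sum.inr (Sum.inr (Sum.inr i)))

/-- Base relation of `G_{m,t}`.  `blk b i` is the `t`-block partition of the clique `C_i`
(`b = false`) resp. `C_i'` (`b = true`); `f i` (resp. `g i`) is the vertex of `I_i`
(resp. `I_i'`) adjacent to `s_i`.  Edges: cliques `C_i`, `C_i'`; complete bipartite graphs
`C_i — I_i` and `C_i' — I_i'`; the `y`-th vertex of `I_{i-1}` joined to the block
`C_{i, y}` (likewise primed); `s_i` joined to one vertex of `I_i` and one of `I_i'`. -/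
def gmtRel (m q t : ℕ) (blk : Bool → Fin m → Fin (q - 1) → Fin t)
    (f g : Fin m → Fin t) : Vmt m q t → Vmt m q t → Prop
  | Sum.inl (i, _), Sum.inl (j, _) => i = j
  | Sum.inl (i, x), Sum.inr (Sum.inr (Sum.inl (j, y))) =>
      i = j ∨ ((j : ℕ) + 1 = (i : ℕ) ∧ blk false i x = y)
  | Sum.inr (Sum.inl (i, _)), Sum.inr (Sum.inl (j, _)) => i = j
  | Sum.inr (Sum.inl (i, x)), Sum.inr (Sum.inr (Sum.inr (Sum.inl (j, y)))) =>
      i = j ∨ ((j : ℕ) + 1 = (i : ℕ) ∧ blk true i x = y)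
  | Sum.inr (Sum.inr (Sum.inr (Sum.inr i))), Sum.inr (Sum.inr (Sum.inl (j, y))) =>
      i = j ∧ y = f i
  | Sum.inr (Sum.inr (Sum.inr (Sum.inr i))), Sum.inr (Sum.inr (Sum.inr (Sum.inl (j, y)))) =>
      i = j ∧ y = g i
  | _, _ => False

/-- The graph `G_{m,t}`. -/
def gmtGraph (m q t : ℕ) (blk : Bool → Fin m → Fin (q - 1) → Fin t)
    (f g : Fin m → Fin t) : SimpleGraph (Vmt m q t) :=
  SimpleGraph.fromRel (gmtRel m q t blk f g)

/-- The block partition is into `t` almost-equal parts (sizes `⌊(q-1)/t⌋` or `⌈(q-1)/t⌉`). -/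
def BlkAlmostEqual (m q t : ℕ) (blk : Bool → Fin m → Fin (q - 1) → Fin t) : Prop :=
  ∀ (b : Bool) (i : Fin m) (j : Fin t),
    {x : Fin (q - 1) | blk b i x = j}.ncard = (q - 1) / t ∨
    {x : Fin (q - 1) | blk b i x = j}.ncard = (q - 1 + t - 1) / t

/-- A proper `q`-coloring. -/
def IsProperColoring {V : Type} (q : ℕ) (G : SimpleGraph V) (σ : V → Fin q) : Prop :=
  ∀ u v : V, G.Adj u v → σ u ≠ σ v

/-!
In a proper `q`-coloring the clique `C_i` takes `q - 1` distinct colors, so it misses exactly one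
color. It misses the colors of all of `I_i`, and, through its blocks, the color of every vertex
of `I_{i-1}`; hence all the sets `I_1, …, I_m` share one color `c`, and likewise the `I_i'` share
a color `c'`. Conversely, any colors of the `s_i` outside `{c, c'}` together with bijections
of every clique onto the colors other than `c` (resp. `c'`) give a proper coloring. So
`|[q] \ {c, c'}| ^ m * ((q - 1)!) ^ (2m)` colorings give `I_1, I_1'` the colors `c, c'`, and
summing over `c = c'` and over `c ≠ c'` gives both counts. Their ratio is at least
`1 - (q - 1) ((q - 2) / (q - 1)) ^ m ≥ 1 - (q - 1) e ^ (-m / (q - 1))`.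
-/

open Finset

theorem eq_of_forall_ne_of_injective {α β : Type*} [Fintype α] [Fintype β] {h : α → β}
    (hinj : Function.Injective h) (hcard : Fintype.card β ≤ Fintype.card α + 1) {a b : β}
    (ha : ∀ x, h x ≠ a) (hb : ∀ x, h x ≠ b) : a = b := by
  classical
  by_contra hab
  have hb' : b ∉ univ.image h := by simpa using hb
  have ha' : a ∉ insert b (univ.image h) := by simp [ha, hab]
  have hle := card_le_univ (insert a (insert b (univ.image h)))
  rw [card_insert_of_notMem ha', card_insert_of_notMem hb', card_image_of_injective _ hinj,
    card_univ] at hle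
  omega

noncomputable def Function.Injective.equivSubtypeNe {α β : Type*} [Fintype α] [Fintype β]
    [DecidableEq β] {h : α → β} (hinj : Function.Injective h) {c : β} (hc : ∀ x, h x ≠ c)
    (hcard : Fintype.card α = Fintype.card β - 1) : α ≃ {y // y ≠ c} :=
  Equiv.ofBijective (fun x => ⟨h x, hc x⟩) <| (Fintype.bijective_iff_injective_and_card _).2
    ⟨fun _ _ hxy => hinj (congrArg Subtype.val hxy), by simp [Fintype.card_subtype_compl, hcard]⟩

theorem card_subtype_ne_and_ne {α : Type*} [Fintype α] [DecidableEq α] (c c' : α) :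
    Fintype.card {x // x ≠ c ∧ x ≠ c'} = Fintype.card α - #{c, c'} := by
  rw [Fintype.card_subtype, ← card_univ, ← card_sdiff_of_subset (subset_univ _)]
  congr 1
  ext x
  simp

theorem ncard_setOf_and_mem_eq_sum {α β : Type*} [Finite α] [DecidableEq β] (P : α → Prop)
    (π : α → β) (D : Finset β) :
    {a | P a ∧ π a ∈ D}.ncard = ∑ b ∈ D, {a | P a ∧ π a = b}.ncard := by
  classical
  have := Fintype.ofFinite α
  simp only [Set.ncard_eq_toFinset_card', Set.toFinset_ofPred]
  rw [card_eq_sum_card_fiberwise (t := D) (fun a ha => (mem_filter.1 ha).2.2)]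
  refine sum_congr rfl fun b hb => congrArg card ?_
  ext a
  simp only [mem_filter, mem_univ, true_and]
  constructor
  · exact fun ⟨⟨hP, _⟩, hb⟩ => ⟨hP, hb⟩
  · rintro ⟨hP, rfl⟩
    exact ⟨⟨hP, hb⟩, rfl⟩

theorem ncard_setOf_eq_add_ncard_and_not {α : Type*} [Finite α] (P Q : α → Prop) :
    {a | P a}.ncard = {a | P a ∧ Q a}.ncard + {a | P a ∧ ¬Q a}.ncard :=
  (Set.ncard_inter_add_ncard_sdiff_eq_ncard {a | P a} {a | Q a}).symm

theorem one_sub_pow_le_exp_neg_mul {x : ℝ} (hx : x ≤ 1) (m : ℕ) :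
    (1 - x) ^ m ≤ Real.exp (-(m * x)) :=
  calc (1 - x) ^ m ≤ Real.exp (-x) ^ m :=
        pow_le_pow_left₀ (by linarith) (Real.one_sub_le_exp_neg x) m
    _ = Real.exp (-(m * x)) := by rw [← Real.exp_nat_mul]; ring_nf

theorem one_sub_exp_le_div_add {q : ℝ} (hq : 2 ≤ q) (m : ℕ) {F : ℝ} (hF : 0 < F) :
    1 - (q - 1) * Real.exp (-(m : ℝ) / (q - 1)) ≤
      q * (q - 1) ^ m * F / (q * (q - 1) ^ m * F + q * (q - 1) * (q - 2) ^ m * F) := by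
  have hq1 : 0 < q - 1 := by linarith
  set a := q * (q - 1) ^ m * F
  set b := q * (q - 1) * (q - 2) ^ m * F
  have ha : 0 < a := by positivity
  have hb : 0 ≤ b := mul_nonneg (mul_nonneg (by positivity) (pow_nonneg (by linarith) m)) hF.le
  have hba : b / a = (q - 1) * (1 - 1 / (q - 1)) ^ m := by
    rw [one_sub_div hq1.ne', show q - 1 - 1 = q - 2 by ring, div_pow]
    field_simp
    ring
  have hexp : (1 - 1 / (q - 1)) ^ m ≤ Real.exp (-(m : ℝ) / (q - 1)) := by
    rw [neg_div, div_eq_mul_one_div (m : ℝ)]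
    exact one_sub_pow_le_exp_neg_mul (by rw [div_le_one hq1]; linarith) m
  calc 1 - (q - 1) * Real.exp (-(m : ℝ) / (q - 1)) ≤ 1 - b / a := by
        rw [hba]; gcongr
    _ ≤ 1 - b / (a + b) := by gcongr; linarith
    _ = a / (a + b) := by field_simp; ring

section Graph

variable {m q t : ℕ} {blk : Bool → Fin m → Fin (q - 1) → Fin t} {f g : Fin m → Fin t}

def cliqueVertex : Bool → Fin m → Fin (q - 1) → Vmt m q t
  | false => CV
  | true => CV'

def indepVertex : Bool → Fin m → Fin t → Vmt m q t
  | false => IV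
  | true => IV'

theorem gmtGraph_adj_of_gmtRel {u v : Vmt m q t} (hne : u ≠ v) (h : gmtRel m q t blk f g u v) :
    (gmtGraph m q t blk f g).Adj u v :=
  SimpleGraph.fromRel_adj .. |>.2 ⟨hne, Or.inl h⟩

theorem gmtGraph_adj_cliqueVertex (b : Bool) (i : Fin m) {x x' : Fin (q - 1)} (h : x ≠ x') :
    (gmtGraph m q t blk f g).Adj (cliqueVertex b i x) (cliqueVertex b i x') := by
  cases b <;> exact gmtGraph_adj_of_gmtRel (by simpa [cliqueVertex, CV, CV'] using h) rfl

theorem gmtGraph_adj_cliqueVertex_indepVertex (b : Bool) (i : Fin m) (x : Fin (q - 1))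
    (y : Fin t) : (gmtGraph m q t blk f g).Adj (cliqueVertex b i x) (indepVertex b i y) := by
  cases b <;>
    exact gmtGraph_adj_of_gmtRel (by simp [cliqueVertex, indepVertex, CV, CV', IV, IV'])
      (Or.inl rfl)

theorem gmtGraph_adj_cliqueVertex_indepVertex_of_succ (b : Bool) {i j : Fin m}
    (hij : (j : ℕ) + 1 = i) (x : Fin (q - 1)) :
    (gmtGraph m q t blk f g).Adj (cliqueVertex b i x) (indepVertex b j (blk b i x)) := by
  cases b <;>
    exact gmtGraph_adj_of_gmtRel (by simp [cliqueVertex, indepVertex, CV, CV', IV, IV'])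
      (Or.inr ⟨hij, rfl⟩)

theorem gmtGraph_adj_SV_IV (i : Fin m) : (gmtGraph m q t blk f g).Adj (SV i) (IV i (f i)) :=
  gmtGraph_adj_of_gmtRel (by simp [SV, IV]) ⟨rfl, rfl⟩

theorem gmtGraph_adj_SV_IV' (i : Fin m) : (gmtGraph m q t blk f g).Adj (SV i) (IV' i (g i)) :=
  gmtGraph_adj_of_gmtRel (by simp [SV, IV']) ⟨rfl, rfl⟩

namespace IsProperColoring

variable {σ : Vmt m q t → Fin q}

theorem injective_cliqueVertex (hσ : IsProperColoring q (gmtGraph m q t blk f g) σ) (b : Bool)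
    (i : Fin m) : Function.Injective fun x => σ (cliqueVertex b i x) := fun _ _ h => by
  by_contra hne
  exact hσ _ _ (gmtGraph_adj_cliqueVertex b i hne) h

theorem eq_of_avoided_by_clique (hσ : IsProperColoring q (gmtGraph m q t blk f g) σ) (b : Bool)
    (i : Fin m) {a a' : Fin q} (ha : ∀ x, σ (cliqueVertex b i x) ≠ a)
    (ha' : ∀ x, σ (cliqueVertex b i x) ≠ a') : a = a' :=
  eq_of_forall_ne_of_injective (hσ.injective_cliqueVertex b i) (by simp; omega) ha ha'

theorem color_indepVertex_eq_of_eq (hσ : IsProperColoring q (gmtGraph m q t blk f g) σ)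
    (b : Bool) (i : Fin m) (y y' : Fin t) : σ (indepVertex b i y) = σ (indepVertex b i y') :=
  hσ.eq_of_avoided_by_clique b i (fun x => hσ _ _ (gmtGraph_adj_cliqueVertex_indepVertex b i x y))
    (fun x => hσ _ _ (gmtGraph_adj_cliqueVertex_indepVertex b i x y'))

theorem color_indepVertex_eq_of_succ (hσ : IsProperColoring q (gmtGraph m q t blk f g) σ)
    (b : Bool) {i j : Fin m} (hij : (j : ℕ) + 1 = i) (y y' : Fin t) :
    σ (indepVertex b i y) = σ (indepVertex b j y') :=
  hσ.eq_of_avoided_by_clique b i (fun x => hσ _ _ (gmtGraph_adj_cliqueVertex_indepVertex b i x y))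
    fun x => by
      rw [hσ.color_indepVertex_eq_of_eq b j y' (blk b i x)]
      exact hσ _ _ (gmtGraph_adj_cliqueVertex_indepVertex_of_succ b hij x)

theorem color_indepVertex_eq_zero (hσ : IsProperColoring q (gmtGraph m q t blk f g) σ)
    (b : Bool) (i : Fin m) (y : Fin t) :
    σ (indepVertex b i y) = σ (indepVertex b ⟨0, i.pos⟩ y) := by
  obtain ⟨n, hn⟩ := i
  induction n with
  | zero => rfl
  | succ k ih => exact (hσ.color_indepVertex_eq_of_succ b rfl y y).trans (ih (by omega))

theorem color_indepVertex_eq (hσ : IsProperColoring q (gmtGraph m q t blk f g) σ) (b : Bool)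
    (i j : Fin m) (y y' : Fin t) : σ (indepVertex b i y) = σ (indepVertex b j y') := by
  rw [hσ.color_indepVertex_eq_zero b i, hσ.color_indepVertex_eq_zero b j]
  exact hσ.color_indepVertex_eq_of_eq b _ y y'

end IsProperColoring

/-- The colors of the `s_i` and the colorings of the cliques `C_i`, `C_i'` in a proper coloring
in which every `I_i` has color `c` and every `I_i'` has color `c'`. -/
abbrev ColoringData (m q : ℕ) (c c' : Fin q) : Type :=
  (Fin m → {x : Fin q // x ≠ c ∧ x ≠ c'}) × (Fin m → Fin (q - 1) ≃ {x : Fin q // x ≠ c}) ×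
    (Fin m → Fin (q - 1) ≃ {x : Fin q // x ≠ c'})

namespace ColoringData

variable {c c' : Fin q}

def toColoring (d : ColoringData m q c c') : Vmt m q t → Fin q
  | Sum.inl (i, x) => d.2.1 i x
  | Sum.inr (Sum.inl (i, x)) => d.2.2 i x
  | Sum.inr (Sum.inr (Sum.inl _)) => c
  | Sum.inr (Sum.inr (Sum.inr (Sum.inl _))) => c'
  | Sum.inr (Sum.inr (Sum.inr (Sum.inr i))) => d.1 i

theorem toColoring_injective :
    Function.Injective (toColoring : ColoringData m q c c' → Vmt m q t → Fin q) := by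
  rintro ⟨s, e, e'⟩ ⟨s₂, e₂, e₂'⟩ h
  simp only [Prod.mk.injEq]
  exact ⟨funext fun i => Subtype.ext (congrFun h (SV i)),
    funext fun i => Equiv.ext fun x => Subtype.ext (congrFun h (CV i x)),
    funext fun i => Equiv.ext fun x => Subtype.ext (congrFun h (CV' i x))⟩

theorem isProperColoring_toColoring (d : ColoringData m q c c') :
    IsProperColoring q (gmtGraph m q t blk f g) d.toColoring := by
  obtain ⟨s, e, e'⟩ := d
  have key : ∀ u v : Vmt m q t, u ≠ v → gmtRel m q t blk f g u v →
      toColoring (s, e, e') u ≠ toColoring (s, e, e') v := by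
    rintro (⟨i, x⟩ | ⟨i, x⟩ | ⟨i, y⟩ | ⟨i, y⟩ | i) (⟨j, x'⟩ | ⟨j, x'⟩ | ⟨j, y'⟩ | ⟨j, y'⟩ | j)
      hne hrel <;>
      first
      | exact hrel.elim
      | exact (e i x).2
      | exact (e' i x).2
      | exact (s i).2.1
      | exact (s i).2.2
      | (cases hrel; exact fun hxx' => hne (by rw [(e i).injective (Subtype.ext hxx')]))
      | (cases hrel; exact fun hxx' => hne (by rw [(e' i).injective (Subtype.ext hxx')]))
  intro u v huv
  obtain ⟨hne, h | h⟩ := (SimpleGraph.fromRel_adj ..).1 huv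
  · exact key u v hne h
  · exact (key v u hne.symm h).symm

end ColoringData

namespace IsProperColoring

variable {σ : Vmt m q t → Fin q}

noncomputable def toColoringData (hσ : IsProperColoring q (gmtGraph m q t blk f g) σ)
    (i₀ : Fin m) (y₀ : Fin t) : ColoringData m q (σ (IV i₀ y₀)) (σ (IV' i₀ y₀)) :=
  (fun i => ⟨σ (SV i),
      hσ.color_indepVertex_eq false i i₀ (f i) y₀ ▸ hσ _ _ (gmtGraph_adj_SV_IV i),
      hσ.color_indepVertex_eq true i i₀ (g i) y₀ ▸ hσ _ _ (gmtGraph_adj_SV_IV' i)⟩,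
    fun i => (hσ.injective_cliqueVertex false i).equivSubtypeNe
      (fun x => hσ.color_indepVertex_eq false i i₀ y₀ y₀ ▸
        hσ _ _ (gmtGraph_adj_cliqueVertex_indepVertex false i x y₀)) (by simp),
    fun i => (hσ.injective_cliqueVertex true i).equivSubtypeNe
      (fun x => hσ.color_indepVertex_eq true i i₀ y₀ y₀ ▸
        hσ _ _ (gmtGraph_adj_cliqueVertex_indepVertex true i x y₀)) (by simp))

theorem toColoring_toColoringData (hσ : IsProperColoring q (gmtGraph m q t blk f g) σ)
    (i₀ : Fin m) (y₀ : Fin t) : (hσ.toColoringData i₀ y₀).toColoring = σ := by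
  funext v
  rcases v with ⟨i, x⟩ | ⟨i, x⟩ | ⟨i, y⟩ | ⟨i, y⟩ | i
  · rfl
  · rfl
  · exact (hσ.color_indepVertex_eq false i i₀ y y₀).symm
  · exact (hσ.color_indepVertex_eq true i i₀ y y₀).symm
  · rfl

end IsProperColoring

theorem range_toColoring (i₀ : Fin m) (y₀ : Fin t) (c c' : Fin q) :
    Set.range (ColoringData.toColoring : ColoringData m q c c' → Vmt m q t → Fin q) =
      {σ | IsProperColoring q (gmtGraph m q t blk f g) σ ∧
        (σ (IV i₀ y₀), σ (IV' i₀ y₀)) = (c, c')} := by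
  ext σ
  constructor
  · rintro ⟨d, rfl⟩
    exact ⟨d.isProperColoring_toColoring, rfl⟩
  · rintro ⟨hσ, hc⟩
    obtain ⟨rfl, rfl⟩ := Prod.mk.inj hc
    exact ⟨hσ.toColoringData i₀ y₀, hσ.toColoring_toColoringData i₀ y₀⟩

theorem card_equiv_subtype_ne (c : Fin q) :
    Fintype.card (Fin (q - 1) ≃ {x : Fin q // x ≠ c}) = Nat.factorial (q - 1) := by
  rw [Fintype.card_equiv (Fintype.equivOfCardEq (by simp [Fintype.card_subtype_compl])),
    Fintype.card_fin]

theorem ncard_properColorings_fiber (i₀ : Fin m) (y₀ : Fin t) (p : Fin q × Fin q) :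
    {σ | IsProperColoring q (gmtGraph m q t blk f g) σ ∧
        (σ (IV i₀ y₀), σ (IV' i₀ y₀)) = p}.ncard =
      Fintype.card {x : Fin q // x ≠ p.1 ∧ x ≠ p.2} ^ m * Nat.factorial (q - 1) ^ (2 * m) := by
  obtain ⟨c, c'⟩ := p
  rw [← range_toColoring, Set.ncard_range_of_injective ColoringData.toColoring_injective,
    Nat.card_eq_fintype_card]
  simp only [Fintype.card_prod, Fintype.card_fun, card_equiv_subtype_ne, Fintype.card_fin]
  ring

theorem ncard_properColorings_of_mem (i₀ : Fin m) (y₀ : Fin t) (D : Finset (Fin q × Fin q))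
    {k : ℕ} (hk : ∀ p ∈ D, Fintype.card {x : Fin q // x ≠ p.1 ∧ x ≠ p.2} = k) :
    {σ | IsProperColoring q (gmtGraph m q t blk f g) σ ∧
        (σ (IV i₀ y₀), σ (IV' i₀ y₀)) ∈ D}.ncard =
      #D * (k ^ m * Nat.factorial (q - 1) ^ (2 * m)) := by
  rw [ncard_setOf_and_mem_eq_sum, ← smul_eq_mul, ← sum_const]
  exact sum_congr rfl fun p hp => by rw [ncard_properColorings_fiber, hk p hp]

theorem ncard_properColorings_eq (i₀ : Fin m) (y₀ : Fin t) :
    {σ | IsProperColoring q (gmtGraph m q t blk f g) σ ∧ σ (IV i₀ y₀) = σ (IV' i₀ y₀)}.ncard =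
      q * (q - 1) ^ m * Nat.factorial (q - 1) ^ (2 * m) := by
  have h := ncard_properColorings_of_mem (blk := blk) (f := f) (g := g) i₀ y₀ univ.diag
    (k := q - 1) fun p hp => by
      rw [(mem_diag.1 hp).2, card_subtype_ne_and_ne, pair_eq_singleton, card_singleton, Fintype.card_fin]
  rw [diag_card, card_univ, Fintype.card_fin, ← mul_assoc] at h
  simpa [mem_diag] using h

theorem ncard_properColorings_ne (i₀ : Fin m) (y₀ : Fin t) :
    {σ | IsProperColoring q (gmtGraph m q t blk f g) σ ∧ σ (IV i₀ y₀) ≠ σ (IV' i₀ y₀)}.ncard =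
      q * (q - 1) * (q - 2) ^ m * Nat.factorial (q - 1) ^ (2 * m) := by
  have h := ncard_properColorings_of_mem (blk := blk) (f := f) (g := g) i₀ y₀ univ.offDiag
    (k := q - 2) fun p hp => by
      rw [card_subtype_ne_and_ne, card_pair (mem_offDiag.1 hp).2.2, Fintype.card_fin]
  rw [offDiag_card, card_univ, Fintype.card_fin, ← Nat.mul_sub_one, ← mul_assoc] at h
  simpa [mem_offDiag] using h

end Graph

theorem stmt11_general (q m t : ℕ) (hq : 3 ≤ q) (hm : 1 ≤ m) (ht : 1 ≤ t)
    (blk : Bool → Fin m → Fin (q - 1) → Fin t)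
    (f g : Fin m → Fin t) :
    {σ : Vmt m q t → Fin q | IsProperColoring q (gmtGraph m q t blk f g) σ ∧
        σ (IV ⟨0, hm⟩ ⟨0, ht⟩) = σ (IV' ⟨0, hm⟩ ⟨0, ht⟩)}.ncard =
      q * (q - 1) ^ m * (Nat.factorial (q - 1)) ^ (2 * m) ∧
    {σ : Vmt m q t → Fin q | IsProperColoring q (gmtGraph m q t blk f g) σ ∧
        σ (IV ⟨0, hm⟩ ⟨0, ht⟩) ≠ σ (IV' ⟨0, hm⟩ ⟨0, ht⟩)}.ncard =
      q * (q - 1) * (q - 2) ^ m * (Nat.factorial (q - 1)) ^ (2 * m) ∧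
    (({σ : Vmt m q t → Fin q | IsProperColoring q (gmtGraph m q t blk f g) σ ∧
          σ (IV ⟨0, hm⟩ ⟨0, ht⟩) = σ (IV' ⟨0, hm⟩ ⟨0, ht⟩)}.ncard : ℝ) /
        ({σ : Vmt m q t → Fin q | IsProperColoring q (gmtGraph m q t blk f g) σ}.ncard : ℝ))
      ≥ 1 - ((q : ℝ) - 1) * Real.exp (-(m : ℝ) / ((q : ℝ) - 1)) := by
  have hsame := ncard_properColorings_eq (blk := blk) (f := f) (g := g) ⟨0, hm⟩ ⟨0, ht⟩
  have hdiff := ncard_properColorings_ne (blk := blk) (f := f) (g := g) ⟨0, hm⟩ ⟨0, ht⟩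
  refine ⟨hsame, hdiff, ?_⟩
  rw [ncard_setOf_eq_add_ncard_and_not (IsProperColoring q (gmtGraph m q t blk f g))
    fun σ => σ (IV ⟨0, hm⟩ ⟨0, ht⟩) = σ (IV' ⟨0, hm⟩ ⟨0, ht⟩), hsame, hdiff]
  push_cast [Nat.cast_sub (by omega : 1 ≤ q), Nat.cast_sub (by omega : 2 ≤ q)]
  exact one_sub_exp_le_div_add (by exact_mod_cast (by omega : 2 ≤ q)) m (by positivity)

/-- Exact counts of proper q-colorings of G_{m,t} according to whether the
(monochromatic) independent sets I_1 and I_1' receive the same or distinct colors,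
and the resulting probability bound. -/
theorem stmt11 (q m t : ℕ) (hq : 3 ≤ q) (hm : 1 ≤ m) (ht : 1 ≤ t) (htq : t < q)
    (blk : Bool → Fin m → Fin (q - 1) → Fin t)
    (hblk : BlkAlmostEqual m q t blk)
    (f g : Fin m → Fin t) :
    {σ : Vmt m q t → Fin q | IsProperColoring q (gmtGraph m q t blk f g) σ ∧
        σ (IV ⟨0, hm⟩ ⟨0, ht⟩) = σ (IV' ⟨0, hm⟩ ⟨0, ht⟩)}.ncard =
      q * (q - 1) ^ m * (Nat.factorial (q - 1)) ^ (2 * m) ∧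
    {σ : Vmt m q t → Fin q | IsProperColoring q (gmtGraph m q t blk f g) σ ∧
        σ (IV ⟨0, hm⟩ ⟨0, ht⟩) ≠ σ (IV' ⟨0, hm⟩ ⟨0, ht⟩)}.ncard =
      q * (q - 1) * (q - 2) ^ m * (Nat.factorial (q - 1)) ^ (2 * m) ∧
    (({σ : Vmt m q t → Fin q | IsProperColoring q (gmtGraph m q t blk f g) σ ∧
          σ (IV ⟨0, hm⟩ ⟨0, ht⟩) = σ (IV' ⟨0, hm⟩ ⟨0, ht⟩)}.ncard : ℝ) /
        ({σ : Vmt m q t → Fin q | IsProperColoring q (gmtGraph m q t blk f g) σ}.ncard : ℝ))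
      ≥ 1 - ((q : ℝ) - 1) * Real.exp (-(m : ℝ) / ((q : ℝ) - 1)) :=
  stmt11_general q m t hq hm ht blk f g
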